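/- Let Δ ⊆ ℝ^d be a reflexive polytope, let 1 ≤ k ≤ 4, and let v₁,…,v_k ∈ Δ ∩ ℤ^d be ℝ-linearly independent points satisfying Cone(v₁,…,v_k) ∩ Δ ∩ ℤ^d = {0, v₁, …, v_k}. Then there exists m ∈ ℤ^d with ⟨m, vᵢ⟩ = 1 for all i = 1,…,k. (This is the combinatorial content of the statement that the toric variety of the 4-skeleton of a Δ-maximal fan is Gorenstein.) -/

import Mathlib

open Pointwise

/-- The standard pairing `⟨m,n⟩ = ∑ i, mᵢ nᵢ` on `ℝ^d`. -/
def pairing {d : ℕ} (m n : Fin d → ℝ) : ℝ := ∑ i, m i * n i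

/-- A point of `ℝ^d` is a lattice point if all coordinates are integers. -/
def IsLatticePt {d : ℕ} (v : Fin d → ℝ) : Prop := ∀ i, ∃ n : ℤ, v i = (n : ℝ)

/-- The set of lattice points of `ℝ^d`. -/
def latticePts (d : ℕ) : Set (Fin d → ℝ) := {v | IsLatticePt v}

/-- A lattice polytope is the convex hull of finitely many lattice points. -/
def IsLatticePolytope {d : ℕ} (Δ : Set (Fin d → ℝ)) : Prop :=
  ∃ S : Finset (Fin d → ℝ), (S : Set (Fin d → ℝ)) ⊆ latticePts d ∧
    Δ = convexHull ℝ (S : Set (Fin d → ℝ))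

/-- The dual polytope `Δ* = {m : ⟨m,n⟩ ≥ -1 for all n ∈ Δ}`. -/
def dualPolytope {d : ℕ} (Δ : Set (Fin d → ℝ)) : Set (Fin d → ℝ) :=
  {m | ∀ n ∈ Δ, -1 ≤ pairing m n}

/-- A reflexive polytope: a lattice polytope with `0` in its interior
whose dual polytope is again a lattice polytope. -/
def IsReflexive {d : ℕ} (Δ : Set (Fin d → ℝ)) : Prop :=
  IsLatticePolytope Δ ∧ (0 : Fin d → ℝ) ∈ interior Δ ∧ IsLatticePolytope (dualPolytope Δ)

/-- `Cone(v₁,…,v_k) = {r₁v₁ + ⋯ + r_kv_k : rᵢ ≥ 0}`. -/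
def coneOf {d k : ℕ} (v : Fin k → (Fin d → ℝ)) : Set (Fin d → ℝ) :=
  {x | ∃ r : Fin k → ℝ, (∀ i, 0 ≤ r i) ∧ x = ∑ i, r i • v i}

/-- `r·∂Δ`, the frontier (topological boundary) of the dilate `rΔ`. -/
def bdry {d : ℕ} (r : ℝ) (Δ : Set (Fin d → ℝ)) : Set (Fin d → ℝ) := frontier (r • Δ)

/-- The points of `S` lie in a common proper face of `Δ`: there is `u` with
`⟨u,x⟩ ≤ 1` on `Δ` and `⟨u,v⟩ = 1` for all `v ∈ S`. -/
def InCommonFace {d : ℕ} (Δ : Set (Fin d → ℝ)) (S : Set (Fin d → ℝ)) : Prop :=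
  ∃ u : Fin d → ℝ, (∀ x ∈ Δ, pairing u x ≤ 1) ∧ ∀ v ∈ S, pairing u v = 1

/-- Coordinatewise cast of an integer vector to a real vector. -/
def toRealVec {d : ℕ} (n : Fin d → ℤ) : Fin d → ℝ := fun i => (n i : ℝ)

/-!
Write a lattice point of the span of the `vᵢ` as `∑ μᵢ vᵢ`. Reflexivity means that every lattice
point outside `Δ` pairs to at most `-2` with some lattice point of `Δ*`, so by the cone condition a
lattice point `∑ μᵢ vᵢ ≠ 0` with all `μᵢ ∈ [0, 1)` has `∑ μᵢ ≥ 2`. Applied to the fractional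
parts of `μ` and of `-μ`, whose sums add up to at most `k ≤ 4`, this forces `∑ μᵢ ∈ ℤ`. Hence the
functional `vᵢ ↦ 1` is integral on `span(vᵢ) ∩ ℤ^d`; this sublattice is saturated, hence a direct
summand of `ℤ^d`, so the functional extends to some `m ∈ ℤ^d`.
-/

open Matrix

theorem LinearIndependent.exists_linearMap_apply_eq {K V V' ι : Type*} [Field K]
    [AddCommGroup V] [Module K V] [AddCommGroup V'] [Module K V'] {v : ι → V}
    (hv : LinearIndependent K v) (f : ι → V') : ∃ g : V →ₗ[K] V', ∀ i, g (v i) = f i := by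
  obtain ⟨g, hg⟩ := LinearMap.exists_extend ((Module.Basis.span hv).constr K f)
  refine ⟨g, fun i => ?_⟩
  have hvi : v i = (Submodule.span K (Set.range v)).subtype (Module.Basis.span hv i) := by
    simp [Module.Basis.span_apply]
  rw [hvi, ← LinearMap.comp_apply, hg, Module.Basis.constr_basis]

theorem LinearMap.apply_eq_dotProduct {R ι : Type*} [CommSemiring R] [Fintype ι] [DecidableEq ι]
    (f : (ι → R) →ₗ[R] R) (x : ι → R) : f x = (fun i => f (Pi.single i 1)) ⬝ᵥ x := by
  conv_lhs => rw [← Finset.univ_sum_single x]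
  simp only [map_sum, dotProduct, mul_comm (f _)]
  refine Finset.sum_congr rfl fun i _ => ?_
  rw [← smul_eq_mul, ← map_smul, ← Pi.single_smul, smul_eq_mul, mul_one]

theorem Submodule.exists_extend_of_projective_quotient {R M P : Type*} [Ring R]
    [AddCommGroup M] [Module R M] [AddCommGroup P] [Module R P] {N : Submodule R M}
    [Module.Projective R (M ⧸ N)] (φ : N →ₗ[R] P) : ∃ ψ : M →ₗ[R] P, ψ ∘ₗ N.subtype = φ := by
  obtain ⟨s, hs⟩ := Module.projective_lifting_property N.mkQ LinearMap.id N.mkQ_surjective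
  obtain ⟨r, hr⟩ : ∃ r : M →ₗ[R] N, r ∘ₗ N.subtype = LinearMap.id :=
    ((Function.Exact.split_tfae (LinearMap.exact_subtype_mkQ N) N.injective_subtype
      N.mkQ_surjective).out 0 1).mp (show ∃ l, N.mkQ ∘ₗ l = LinearMap.id from ⟨s, hs⟩)
  exact ⟨φ ∘ₗ r, by rw [LinearMap.comp_assoc, hr, LinearMap.comp_id]⟩

theorem Submodule.isTorsionFree_quotient_comap_restrictScalars {K M V : Type*} [Field K]
    [CharZero K] [AddCommGroup M] [AddCommGroup V] [Module K V] (L : M →ₗ[ℤ] V)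
    (W : Submodule K V) : Module.IsTorsionFree ℤ (M ⧸ (W.restrictScalars ℤ).comap L) := by
  refine .of_smul_eq_zero fun c x hcx => or_iff_not_imp_left.2 fun hc => ?_
  obtain ⟨x, rfl⟩ := Submodule.mkQ_surjective _ x
  rw [← map_smul, Submodule.mkQ_apply, Submodule.Quotient.mk_eq_zero] at hcx
  rw [Submodule.mkQ_apply, Submodule.Quotient.mk_eq_zero]
  have hcx : (c : K) • L x ∈ W := by simpa [Int.cast_smul_eq_zsmul] using hcx
  simpa [smul_smul, hc] using W.smul_mem (c : K)⁻¹ hcx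

theorem AddMonoidHom.exists_intCast_comp_eq {M : Type*} [AddCommGroup M] (f : M →+ ℝ)
    (hf : ∀ x, ∃ z : ℤ, f x = z) : ∃ φ : M →+ ℤ, ∀ x, (φ x : ℝ) = f x := by
  have hfloor : ∀ x, (⌊f x⌋ : ℝ) = f x := fun x => by
    obtain ⟨z, hz⟩ := hf x
    rw [hz, Int.floor_intCast]
  refine ⟨{ toFun := fun x => ⌊f x⌋, map_zero' := by simp, map_add' := fun x y => ?_ }, hfloor⟩
  exact Int.cast_injective (α := ℝ) (by rw [Int.cast_add, hfloor, hfloor, hfloor, map_add])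

theorem pairing_eq_dotProduct {d : ℕ} (m n : Fin d → ℝ) : pairing m n = m ⬝ᵥ n := rfl

theorem isLatticePt_iff_exists_toRealVec_eq {d : ℕ} {x : Fin d → ℝ} :
    IsLatticePt x ↔ ∃ a, toRealVec a = x :=
  ⟨fun h => ⟨fun i => (h i).choose, funext fun i => (h i).choose_spec.symm⟩,
    by rintro ⟨a, rfl⟩ i; exact ⟨a i, rfl⟩⟩

theorem IsLatticePt.neg {d : ℕ} {x : Fin d → ℝ} (hx : IsLatticePt x) : IsLatticePt (-x) :=
  fun i => ⟨-(hx i).choose, by simp [← (hx i).choose_spec]⟩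

theorem pairing_toRealVec {d : ℕ} (a b : Fin d → ℤ) :
    pairing (toRealVec a) (toRealVec b) = ((a ⬝ᵥ b : ℤ) : ℝ) :=
  ((Int.castRingHom ℝ).map_dotProduct a b).symm

def toRealVecLinearMap (d : ℕ) : (Fin d → ℤ) →ₗ[ℤ] Fin d → ℝ :=
  (Int.castAddHom ℝ).toIntLinearMap.compLeft (Fin d)

theorem exists_int_pairing_eq_of_isLatticePt {d : ℕ} (W : Submodule ℝ (Fin d → ℝ))
    (g : (Fin d → ℝ) →ₗ[ℝ] ℝ) (hg : ∀ x ∈ W, IsLatticePt x → ∃ z : ℤ, g x = z) :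
    ∃ m : Fin d → ℤ, ∀ x ∈ W, IsLatticePt x → pairing (toRealVec m) x = g x := by
  set L := toRealVecLinearMap d
  set N := (W.restrictScalars ℤ).comap L
  -- `ℤ^d ⧸ N` is finite and torsion-free, hence free, so `N` is a direct summand
  have := Submodule.isTorsionFree_quotient_comap_restrictScalars L W
  obtain ⟨φ, hφ⟩ := AddMonoidHom.exists_intCast_comp_eq
    (g.restrictScalars ℤ ∘ₗ L ∘ₗ N.subtype).toAddMonoidHom
    fun a => hg _ a.2 (isLatticePt_iff_exists_toRealVec_eq.2 ⟨a, rfl⟩)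
  obtain ⟨ψ, hψ⟩ := Submodule.exists_extend_of_projective_quotient φ.toIntLinearMap
  refine ⟨fun i => ψ (Pi.single i 1), fun x hxW hx => ?_⟩
  obtain ⟨a, rfl⟩ := isLatticePt_iff_exists_toRealVec_eq.1 hx
  rw [pairing_toRealVec, ← ψ.apply_eq_dotProduct]
  exact (congr(($hψ ⟨a, hxW⟩ : ℝ))).trans (hφ ⟨a, hxW⟩)

theorem IsLatticePolytope.convex {d : ℕ} {Δ : Set (Fin d → ℝ)} (hΔ : IsLatticePolytope Δ) :
    Convex ℝ Δ := by
  obtain ⟨S, -, rfl⟩ := hΔ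
  exact convex_convexHull ℝ _

theorem IsLatticePolytope.isClosed {d : ℕ} {Δ : Set (Fin d → ℝ)} (hΔ : IsLatticePolytope Δ) :
    IsClosed Δ := by
  obtain ⟨S, -, rfl⟩ := hΔ
  exact (S.finite_toSet.isCompact_convexHull (𝕜 := ℝ)).isClosed

theorem exists_mem_dualPolytope_pairing_lt_neg_one {d : ℕ} {Δ : Set (Fin d → ℝ)}
    (hconv : Convex ℝ Δ) (hclosed : IsClosed Δ) (h0 : 0 ∈ Δ) {x : Fin d → ℝ} (hx : x ∉ Δ) :
    ∃ m ∈ dualPolytope Δ, pairing m x < -1 := by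
  obtain ⟨f, u, hfΔ, hfx⟩ := geometric_hahn_banach_closed_point hconv hclosed hx
  have hu : 0 < u := by simpa using hfΔ 0 h0
  have hm : ∀ y, pairing (-u⁻¹ • fun i => f (Pi.single i 1)) y = -(f y / u) := fun y => by
    rw [pairing_eq_dotProduct, smul_dotProduct, ← f.coe_coe, ← LinearMap.apply_eq_dotProduct,
      smul_eq_mul, neg_mul, inv_mul_eq_div]
  refine ⟨-u⁻¹ • fun i => f (Pi.single i 1), fun y hy => ?_, ?_⟩
  · rw [hm, neg_le_neg_iff, div_le_one hu]
    exact (hfΔ y hy).le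
  · rw [hm, neg_lt_neg_iff, one_lt_div hu]
    exact hfx

theorem IsLatticePolytope.exists_isLatticePt_pairing_le {d : ℕ} {P : Set (Fin d → ℝ)}
    (hP : IsLatticePolytope P) {m : Fin d → ℝ} (hm : m ∈ P) (x : Fin d → ℝ) :
    ∃ u ∈ P, IsLatticePt u ∧ pairing u x ≤ pairing m x := by
  obtain ⟨T, hT, rfl⟩ := hP
  obtain ⟨u, huT, hux⟩ := ((dotProductBilin ℝ ℝ (A := ℝ)).flip x).concaveOn
    (convex_convexHull ℝ _) |>.exists_le_of_mem_convexHull (subset_convexHull ℝ _) hm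
  exact ⟨u, subset_convexHull ℝ _ huT, hT huT, hux⟩

theorem IsLatticePt.exists_pairing_eq_int {d : ℕ} {u x : Fin d → ℝ} (hu : IsLatticePt u)
    (hx : IsLatticePt x) : ∃ z : ℤ, pairing u x = z := by
  obtain ⟨a, rfl⟩ := isLatticePt_iff_exists_toRealVec_eq.1 hu
  obtain ⟨b, rfl⟩ := isLatticePt_iff_exists_toRealVec_eq.1 hx
  exact ⟨_, pairing_toRealVec a b⟩

theorem IsReflexive.exists_isLatticePt_mem_dualPolytope_pairing_le_neg_two {d : ℕ}
    {Δ : Set (Fin d → ℝ)} (hΔ : IsReflexive Δ) {x : Fin d → ℝ} (hxL : IsLatticePt x)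
    (hx : x ∉ Δ) : ∃ u ∈ dualPolytope Δ, IsLatticePt u ∧ pairing u x ≤ -2 := by
  obtain ⟨hpoly, h0, hdual⟩ := hΔ
  obtain ⟨m, hm, hmx⟩ := exists_mem_dualPolytope_pairing_lt_neg_one hpoly.convex
    hpoly.isClosed (interior_subset h0) hx
  obtain ⟨u, hu, huL, hux⟩ := hdual.exists_isLatticePt_pairing_le hm x
  obtain ⟨z, hz⟩ := huL.exists_pairing_eq_int hxL
  refine ⟨u, hu, huL, ?_⟩
  have hz1 : z < -1 := by exact_mod_cast hz ▸ hux.trans_lt hmx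
  rw [hz]
  exact_mod_cast (show z ≤ -2 by omega)

theorem Int.fract_add_fract_neg_le_one {R : Type*} [Ring R] [LinearOrder R]
    [IsStrictOrderedRing R] [FloorRing R] (x : R) : Int.fract x + Int.fract (-x) ≤ 1 := by
  by_cases hx : Int.fract x = 0
  · simp [hx, Int.fract_neg_eq_zero.2 hx]
  · rw [Int.fract_neg hx, add_sub_cancel]

section Cone

variable {d k : ℕ} {Δ : Set (Fin d → ℝ)} {v : Fin k → Fin d → ℝ}

theorem pairing_sum_smul (m : Fin d → ℝ) (μ : Fin k → ℝ) :
    pairing m (∑ i, μ i • v i) = ∑ i, μ i * pairing m (v i) := by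
  simp [pairing_eq_dotProduct, dotProduct_sum, dotProduct_smul]

theorem isLatticePt_sum_fract_smul (hvL : ∀ i, IsLatticePt (v i)) {μ : Fin k → ℝ}
    (hx : IsLatticePt (∑ i, μ i • v i)) : IsLatticePt (∑ i, Int.fract (μ i) • v i) := by
  have hrange : ∀ y : Fin d → ℝ, IsLatticePt y ↔ y ∈ LinearMap.range (toRealVecLinearMap d) :=
    fun _ => isLatticePt_iff_exists_toRealVec_eq
  simp only [hrange] at hx hvL ⊢
  simp only [Int.fract, sub_smul, Finset.sum_sub_distrib, Int.cast_smul_eq_zsmul]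
  exact sub_mem hx (sum_mem fun i _ => zsmul_mem (hvL i) _)

theorem sum_smul_notMem_of_lt_one (hli : LinearIndependent ℝ v)
    (hcone : coneOf v ∩ Δ ∩ latticePts d = insert (0 : Fin d → ℝ) (Set.range v))
    {μ : Fin k → ℝ} (h0 : ∀ i, 0 ≤ μ i) (h1 : ∀ i, μ i < 1) (hμ : μ ≠ 0)
    (hlat : IsLatticePt (∑ i, μ i • v i)) : ∑ i, μ i • v i ∉ Δ := by
  intro hΔ
  have hmem : ∑ i, μ i • v i ∈ insert 0 (Set.range v) := hcone ▸ ⟨⟨⟨μ, h0, rfl⟩, hΔ⟩, hlat⟩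
  have hinj := hli.fintypeLinearCombination_injective
  rcases hmem with h | ⟨j, hj⟩
  · exact hμ (hinj (by simpa [Fintype.linearCombination_apply] using h))
  · have hμj : μ = Pi.single j 1 := hinj (by simp [Fintype.linearCombination_apply, hj])
    simpa [hμj] using h1 j

theorem eq_zero_or_two_le_sum_of_isLatticePt (hΔ : IsReflexive Δ) (hvΔ : ∀ i, v i ∈ Δ)
    (hli : LinearIndependent ℝ v)
    (hcone : coneOf v ∩ Δ ∩ latticePts d = insert (0 : Fin d → ℝ) (Set.range v))
    {μ : Fin k → ℝ} (h0 : ∀ i, 0 ≤ μ i) (h1 : ∀ i, μ i < 1)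
    (hlat : IsLatticePt (∑ i, μ i • v i)) : μ = 0 ∨ 2 ≤ ∑ i, μ i := by
  refine or_iff_not_imp_left.2 fun hμ => ?_
  obtain ⟨u, hu, -, hux⟩ := hΔ.exists_isLatticePt_mem_dualPolytope_pairing_le_neg_two hlat
    (sum_smul_notMem_of_lt_one hli hcone h0 h1 hμ hlat)
  have : -∑ i, μ i ≤ pairing u (∑ i, μ i • v i) := by
    rw [pairing_sum_smul, ← Finset.sum_neg_distrib]
    exact Finset.sum_le_sum fun i _ => by nlinarith [hu (v i) (hvΔ i), h0 i]
  linarith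

theorem exists_sum_eq_int_of_isLatticePt (hk4 : k ≤ 4) (hΔ : IsReflexive Δ)
    (hvΔ : ∀ i, v i ∈ Δ) (hvL : ∀ i, IsLatticePt (v i)) (hli : LinearIndependent ℝ v)
    (hcone : coneOf v ∩ Δ ∩ latticePts d = insert (0 : Fin d → ℝ) (Set.range v))
    {μ : Fin k → ℝ} (hlat : IsLatticePt (∑ i, μ i • v i)) : ∃ z : ℤ, ∑ i, μ i = z := by
  have hlat_neg : IsLatticePt (∑ i, (-μ i) • v i) := by
    simpa only [neg_smul, Finset.sum_neg_distrib] using hlat.neg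
  have hsplit : ∑ i, μ i = ∑ i, (⌊μ i⌋ : ℝ) + ∑ i, Int.fract (μ i) := by
    rw [← Finset.sum_add_distrib]
    simp
  rcases eq_zero_or_two_le_sum_of_isLatticePt hΔ hvΔ hli hcone (fun i => Int.fract_nonneg _)
    (fun i => Int.fract_lt_one _) (isLatticePt_sum_fract_smul hvL hlat) with h | h
  · exact ⟨∑ i, ⌊μ i⌋, by simp [hsplit, funext_iff.1 h]⟩
  rcases eq_zero_or_two_le_sum_of_isLatticePt hΔ hvΔ hli hcone (fun i => Int.fract_nonneg _)
    (fun i => Int.fract_lt_one _) (isLatticePt_sum_fract_smul hvL hlat_neg) with h' | h'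
  · norm_num [Int.fract_neg_eq_zero.1 (funext_iff.1 h' _)] at h
  have hle : ∑ i, Int.fract (μ i) + ∑ i, Int.fract (-μ i) ≤ 4 := calc
    _ = ∑ i, (Int.fract (μ i) + Int.fract (-μ i)) := Finset.sum_add_distrib.symm
    _ ≤ ∑ _i : Fin k, (1 : ℝ) := Finset.sum_le_sum fun i _ => Int.fract_add_fract_neg_le_one _
    _ ≤ 4 := by simpa using (Nat.cast_le (α := ℝ)).2 hk4
  exact ⟨∑ i, ⌊μ i⌋ + 2, by push_cast; linarith⟩

end Cone

theorem gorenstein_cone_has_integral_support_general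
    (d k : ℕ) (hk4 : k ≤ 4)
    (Δ : Set (Fin d → ℝ)) (hΔ : IsReflexive Δ)
    (v : Fin k → (Fin d → ℝ))
    (hvΔ : ∀ i, v i ∈ Δ) (hvL : ∀ i, IsLatticePt (v i))
    (hli : LinearIndependent ℝ v)
    (hcone : coneOf v ∩ Δ ∩ latticePts d = insert (0 : Fin d → ℝ) (Set.range v)) :
    ∃ m : Fin d → ℤ, ∀ i, pairing (toRealVec m) (v i) = 1 := by
  obtain ⟨g, hg⟩ := hli.exists_linearMap_apply_eq fun _ => (1 : ℝ)
  have hint : ∀ x ∈ Submodule.span ℝ (Set.range v), IsLatticePt x → ∃ z : ℤ, g x = z := by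
    intro x hx hxL
    obtain ⟨μ, rfl⟩ := Submodule.mem_span_range_iff_exists_fun ℝ |>.1 hx
    simpa [hg] using exists_sum_eq_int_of_isLatticePt hk4 hΔ hvΔ hvL hli hcone hxL
  obtain ⟨m, hm⟩ := exists_int_pairing_eq_of_isLatticePt _ g hint
  exact ⟨m, fun i => (hm _ (Submodule.subset_span ⟨i, rfl⟩) (hvL i)).trans (hg i)⟩

/-- For a reflexive polytope `Δ ⊆ ℝ^d` and `1 ≤ k ≤ 4` linearly
independent lattice points `v₁,…,v_k ∈ Δ` with `Cone(v₁,…,v_k) ∩ Δ ∩ ℤ^d = {0,v₁,…,v_k}`,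
there is a lattice point `m ∈ ℤ^d` with `⟨m, vᵢ⟩ = 1` for all `i`. -/
theorem gorenstein_cone_has_integral_support
    (d k : ℕ) (hk1 : 1 ≤ k) (hk4 : k ≤ 4)
    (Δ : Set (Fin d → ℝ)) (hΔ : IsReflexive Δ)
    (v : Fin k → (Fin d → ℝ))
    (hvΔ : ∀ i, v i ∈ Δ) (hvL : ∀ i, IsLatticePt (v i))
    (hli : LinearIndependent ℝ v)
    (hcone : coneOf v ∩ Δ ∩ latticePts d = insert (0 : Fin d → ℝ) (Set.range v)) :
    ∃ m : Fin d → ℤ, ∀ i, pairing (toRealVec m) (v i) = 1 :=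
  gorenstein_cone_has_integral_support_general d k hk4 Δ hΔ v hvΔ hvL hli hcone
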